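/- arXiv:2204.00159 — 2 statements merged into one kernel-verified Lean document; each statement's English description precedes it below -/
import Mathlib

section
/- Let f : Fin a → Fin m and g : Fin k → Fin m be chosen independently and uniformly at random. Then the probability that the range of g is contained in the range of f equals ∑_{i=1}^{min(a,m)} (i/m)^k · C(m,i) · surj(a,i) / m^a, where surj(a,i) = ∑_{j=0}^{i}(-1)^j C(i,j)(i-j)^a is the number of surjections from an a-set onto an i-set. -/
/-!
Conditioning on `f`, the number of admissible `g` is `|range f|^k`. Grouping the `f` by their range
`s`, the number of `f` with range exactly `s` is the number of surjections onto `s`, which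
inclusion–exclusion over the points of `s` missed by `f` evaluates to
`∑ⱼ (-1)ʲ C(|s|, j) (|s| - j)^a`. Ranges of equal size contribute equally, and only sizes
`1 ≤ |s| ≤ min a m` occur.
-/

open Finset

variable {α β : Type*} [Fintype α] [DecidableEq α] [Fintype β] [DecidableEq β]

def numSurj (R : Type*) [Ring R] (n i : ℕ) : R :=
  ∑ j ∈ range (i + 1), (-1) ^ j * (i.choose j : R) * ((i - j : ℕ) : R) ^ n

theorem numSurj_zero_right (R : Type*) [Ring R] {n : ℕ} (hn : n ≠ 0) : numSurj R n 0 = 0 := by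
  simp [numSurj, hn]

theorem card_filter_forall_mem (s : Finset β) :
    #{f : α → β | ∀ x, f x ∈ s} = #s ^ Fintype.card α := by
  have : ({f : α → β | ∀ x, f x ∈ s} : Finset _) = Fintype.piFinset fun _ => s := by
    ext f; simp [Fintype.mem_piFinset]
  rw [this, Fintype.card_piFinset, prod_const, card_univ]

theorem card_filter_image_eq (R : Type*) [CommRing R] (s : Finset β) :
    (#{f : α → β | image f univ = s} : R) = numSurj R (Fintype.card α) #s := by
  -- Inclusion–exclusion over the points of `s` that `f` misses, counting only `f` with
  -- `image f univ ⊆ s`.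
  have incl_excl := inclusion_exclusion_sum_inf_compl (G := R) s
    (fun y => {f : α → β | y ∉ image f univ}) (fun f => if image f univ ⊆ s then 1 else 0)
  have hcovers : ({f ∈ s.inf fun y => ({f | y ∉ image f univ} : Finset (α → β))ᶜ |
      image f univ ⊆ s} : Finset _) = ({f | image f univ = s} : Finset (α → β)) := by
    ext f
    simp [mem_inf, subset_antisymm_iff, subset_iff, and_comm]
  have hmisses : ∀ t : Finset β,
      ({f ∈ t.inf fun y => ({f | y ∉ image f univ} : Finset (α → β)) | image f univ ⊆ s} :
        Finset _) = ({f | ∀ x, f x ∈ s \ t} : Finset (α → β)) := by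
    intro t
    ext f
    simp only [mem_filter, mem_univ, true_and, mem_inf, mem_image, subset_iff, mem_sdiff,
      forall_exists_index, forall_apply_eq_imp_iff, not_exists]
    grind
  simp only [sum_boole, hcovers, hmisses, card_filter_forall_mem, Nat.cast_pow] at incl_excl
  rw [incl_excl, sum_congr rfl fun t ht => by rw [card_sdiff_of_subset (mem_powerset.1 ht)],
    sum_powerset_apply_card (fun j => (-1 : ℤ) ^ j • (((#s - j : ℕ) : R) ^ Fintype.card α)),
    numSurj]
  refine sum_congr rfl fun j _ => ?_
  rw [nsmul_eq_mul, zsmul_eq_mul]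
  push_cast
  ring

theorem numSurj_eq_zero_of_lt (R : Type*) [CommRing R] {n i : ℕ} (h : n < i) :
    numSurj R n i = 0 := by
  have hcount := card_filter_image_eq (α := Fin n) R (univ : Finset (Fin i))
  rw [card_univ, Fintype.card_fin, Fintype.card_fin] at hcount
  have hempty : ({f : Fin n → Fin i | image f univ = univ} : Finset _) = ∅ := by
    refine filter_eq_empty_iff.mpr fun f _ hf => ?_
    have := hf ▸ card_image_le (s := univ) (f := f)
    simp only [card_univ, Fintype.card_fin] at this
    omega
  rw [← hcount, hempty, card_empty, Nat.cast_zero]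

theorem card_filter_range_subset_range {γ : Type*} [Fintype γ] [DecidableEq γ] :
    #{p : (α → β) × (γ → β) | ∀ x, p.2 x ∈ image p.1 univ} =
      ∑ f : α → β, #(image f univ) ^ Fintype.card γ := by
  rw [card_filter, ← univ_product_univ, sum_product]
  refine sum_congr rfl fun f _ => ?_
  rw [← card_filter_forall_mem, card_filter]

theorem sum_card_image_pow (R : Type*) [CommRing R] (k : ℕ) :
    ∑ f : α → β, (#(image f univ) : R) ^ k =
      ∑ i ∈ range (Fintype.card β + 1),
        (Fintype.card β).choose i * numSurj R (Fintype.card α) i * (i : R) ^ k := by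
  have hfiber : ∀ s : Finset β, ∑ f ∈ {f : α → β | image f univ = s}, (#(image f univ) : R) ^ k =
      numSurj R (Fintype.card α) #s * (#s : R) ^ k := by
    intro s
    rw [sum_congr rfl fun f hf => by rw [(mem_filter.1 hf).2], sum_const, nsmul_eq_mul,
      card_filter_image_eq]
  rw [← sum_fiberwise univ (fun f : α → β => image f univ)]
  simp_rw [hfiber]
  rw [← powerset_univ, sum_powerset_apply_card (fun j => numSurj R _ j * (j : R) ^ k), card_univ]
  simp only [nsmul_eq_mul, mul_assoc]

theorem range_subset_range_prob (a k m : ℕ) (ha : 1 ≤ a) (hm : 1 ≤ m) :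
    ((Finset.univ.filter
        (fun p : (Fin a → Fin m) × (Fin k → Fin m) =>
          ∀ x, p.2 x ∈ Finset.image p.1 Finset.univ)).card : ℝ) / (m : ℝ) ^ (a + k) =
      ∑ i ∈ Finset.Icc 1 (min a m),
        ((i : ℝ) / (m : ℝ)) ^ k * (m.choose i : ℝ) *
          (∑ j ∈ Finset.range (i + 1),
            (-1 : ℝ) ^ j * (i.choose j : ℝ) * ((i - j : ℕ) : ℝ) ^ a) / (m : ℝ) ^ a := by
  -- `convert` reconciles the `Decidable` instance: here `∀ x : Fin k` is decided by
  -- `Nat.decidableForallFin`, not by the generic `Fintype.decidableForallFintype`.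
  have hcount : #{p : (Fin a → Fin m) × (Fin k → Fin m) | ∀ x, p.2 x ∈ image p.1 univ} =
      ∑ f : Fin a → Fin m, #(image f univ) ^ k := by
    convert card_filter_range_subset_range (γ := Fin k)
    rw [Fintype.card_fin]
  rw [hcount, Nat.cast_sum]
  push_cast
  rw [sum_card_image_pow, Fintype.card_fin, Fintype.card_fin, sum_div,
    ← sum_subset (s₁ := Icc 1 (min a m)) ?sub ?zero]
  · have hm0 : (m : ℝ) ≠ 0 := Nat.cast_ne_zero.mpr (by omega)
    refine sum_congr rfl fun i _ => ?_
    rw [numSurj, div_pow, pow_add]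
    field_simp
  · intro i hi
    rw [mem_Icc] at hi
    rw [mem_range]
    omega
  · intro i hi hi'
    rw [mem_range] at hi
    rw [mem_Icc] at hi'
    obtain rfl | hai : i = 0 ∨ a < i := by omega
    · rw [numSurj_zero_right ℝ (by omega), mul_zero, zero_mul, zero_div]
    · rw [numSurj_eq_zero_of_lt ℝ hai, mul_zero, zero_mul, zero_div]
end

section
/- The number of functions g : Fin k → Fin m whose range meets a fixed set T of size m−i in exactly j given elements and is otherwise contained in a fixed disjoint set S of size i is at least C(k,j) · j! · i^{k−j}. -/
theorem hit_count_lower (k m i j : ℕ) (hjk : j ≤ k) (hijm : i + j ≤ m)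
    (S T' : Finset (Fin m)) (hdisj : Disjoint S T') (hS : S.card = i) (hT' : T'.card = j) :
    k.choose j * j.factorial * i ^ (k - j) ≤
      (Finset.univ.filter
        (fun g : Fin k → Fin m =>
          (∀ t ∈ T', ∃ x, g x = t) ∧ ∀ x, g x ∈ S ∪ T')).card := by
  classical
  set p : (Fin k → Fin m) → Prop := fun g =>
    (∀ t ∈ T', ∃ x, g x = t) ∧ ∀ x, g x ∈ S ∪ T' with hp
  let σ : Type _ := Σ A : {A : Finset (Fin k) // A.card = j},
      ({x // x ∈ A.1} ≃ {t // t ∈ T'}) × ({x // x ∈ A.1ᶜ} → {s // s ∈ S})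
  let F : σ → {g : Fin k → Fin m // p g} := fun s =>
    ⟨fun x => if hx : x ∈ s.1.1 then (s.2.1 ⟨x, hx⟩ : Fin m)
      else (s.2.2 ⟨x, Finset.mem_compl.2 hx⟩ : Fin m), by
      obtain ⟨A, e, h⟩ := s
      constructor
      · intro t ht
        refine ⟨(e.symm ⟨t, ht⟩).1, ?_⟩
        simp only [dif_pos (e.symm ⟨t, ht⟩).2]
        simp
      · intro x
        by_cases hx : x ∈ A.1
        · simp only [dif_pos hx]
          exact Finset.mem_union_right _ (e ⟨x, hx⟩).2
        · simp only [dif_neg hx]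
          exact Finset.mem_union_left _ (h ⟨x, Finset.mem_compl.2 hx⟩).2⟩
  have hFinj : Function.Injective F := by
    rintro ⟨⟨A1, hA1⟩, e1, h1⟩ ⟨⟨A2, hA2⟩, e2, h2⟩ hF
    have hF' : ∀ x, (if hx : x ∈ A1 then (e1 ⟨x, hx⟩ : Fin m)
        else (h1 ⟨x, Finset.mem_compl.2 hx⟩ : Fin m))
        = (if hx : x ∈ A2 then (e2 ⟨x, hx⟩ : Fin m)
        else (h2 ⟨x, Finset.mem_compl.2 hx⟩ : Fin m)) :=
      fun x => congrFun (congrArg Subtype.val hF) x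
    have hST : ∀ a ∈ S, a ∉ T' := fun a ha => Finset.disjoint_left.1 hdisj ha
    have hA : A1 = A2 := by
      ext x
      constructor
      · intro hx
        by_contra hx2
        have h := hF' x
        rw [dif_pos hx, dif_neg hx2] at h
        exact hST _ (h2 ⟨x, Finset.mem_compl.2 hx2⟩).2 (h ▸ (e1 ⟨x, hx⟩).2)
      · intro hx
        by_contra hx2
        have h := hF' x
        rw [dif_neg hx2, dif_pos hx] at h
        exact hST _ (h1 ⟨x, Finset.mem_compl.2 hx2⟩).2 (h.symm ▸ (e2 ⟨x, hx⟩).2)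
    subst hA
    have he : e1 = e2 := by
      ext x
      have h := hF' x.1
      rw [dif_pos x.2, dif_pos x.2] at h
      exact congrArg Fin.val h
    have hh : h1 = h2 := by
      funext x
      have h := hF' x.1
      rw [dif_neg (Finset.mem_compl.1 x.2), dif_neg (Finset.mem_compl.1 x.2)] at h
      exact Subtype.ext h
    simp [he, hh]
  have hcard : Fintype.card σ = k.choose j * j.factorial * i ^ (k - j) := by
    rw [Fintype.card_sigma]
    have hc : ∀ A : {A : Finset (Fin k) // A.card = j},
        Fintype.card (({x // x ∈ A.1} ≃ {t // t ∈ T'}) × ({x // x ∈ A.1ᶜ} → {s // s ∈ S}))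
          = j.factorial * i ^ (k - j) := by
      intro A
      rw [Fintype.card_prod, Fintype.card_fun]
      have hcA : Fintype.card {x // x ∈ A.1} = j := by
        simp [A.2]
      have hcT : Fintype.card {t // t ∈ T'} = j := by simp [hT']
      rw [Fintype.card_equiv (Fintype.equivOfCardEq (by rw [hcA, hcT])), hcA]
      simp [hS, Finset.card_compl, A.2]
    rw [Finset.sum_congr rfl (fun A _ => hc A), Finset.sum_const, smul_eq_mul,
      Finset.card_univ, Fintype.card_finset_len, Fintype.card_fin, mul_assoc]
  calc k.choose j * j.factorial * i ^ (k - j) = Fintype.card σ := hcard.symm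
    _ ≤ Fintype.card {g : Fin k → Fin m // p g} := Fintype.card_le_of_injective F hFinj
    _ = _ := by rw [Fintype.card_subtype]
end
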